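/- Let F be a field, O the split octonion algebra over F, and a = (α, u, v, β) ∈ O with u ≠ 0. Then there exists g ∈ SL₃(F) such that ρ(g) a = (α, (1,0,0), v', β), where either v' = (λ, 0, 0) for some λ ∈ F or v' = (0, 1, 0). -/

import Mathlib

namespace OctoPaper

variable (F : Type*) [Field F]

/-- The split (Zorn matrix) octonion algebra over `F`. -/
structure Octo where
  x1 : F
  u : Fin 3 → F
  v : Fin 3 → F
  x8 : F

variable {F}

/-- Dot product on `F³`. -/
def dot (u v : Fin 3 → F) : F := u 0 * v 0 + u 1 * v 1 + u 2 * v 2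

/-- Cross product on `F³`. -/
def cross (u v : Fin 3 → F) : Fin 3 → F :=
  ![u 1 * v 2 - u 2 * v 1, u 2 * v 0 - u 0 * v 2, u 0 * v 1 - u 1 * v 0]

instance : Mul (Octo F) where
  mul x y :=
    ⟨x.x1 * y.x1 + dot x.u y.v,
     fun i => x.x1 * y.u i + y.x8 * x.u i - cross x.v y.v i,
     fun i => y.x1 * x.v i + x.x8 * y.v i + cross x.u y.u i,
     x.x8 * y.x8 + dot x.v y.u⟩

instance : Add (Octo F) where add x y := ⟨x.x1 + y.x1, x.u + y.u, x.v + y.v, x.x8 + y.x8⟩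
instance : Neg (Octo F) where neg x := ⟨-x.x1, -x.u, -x.v, -x.x8⟩
instance : Sub (Octo F) where sub x y := x + -y
instance : SMul F (Octo F) where smul c x := ⟨c * x.x1, c • x.u, c • x.v, c * x.x8⟩
instance : One (Octo F) where one := ⟨1, 0, 0, 1⟩
instance : Zero (Octo F) where zero := ⟨0, 0, 0, 0⟩

/-- Trace of an octonion. -/
def tr (x : Octo F) : F := x.x1 + x.x8

/-- Norm of an octonion. -/
def onorm (x : Octo F) : F := x.x1 * x.x8 - dot x.u x.v

/-- Conjugate of an octonion. -/
def conj (x : Octo F) : Octo F := ⟨x.x8, -x.u, -x.v, x.x1⟩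

/-- `g` is an `F`-algebra automorphism of the split octonion algebra:
an `F`-linear bijection preserving multiplication. -/
def IsAut (g : Octo F → Octo F) : Prop :=
  Function.Bijective g ∧
  (∀ x y : Octo F, g (x + y) = g x + g y) ∧
  (∀ (c : F) (x : Octo F), g (c • x) = c • g x) ∧
  (∀ x y : Octo F, g (x * y) = g x * g y)

/-- The automorphism `ρ(g)` of `O` attached to `g ∈ SL₃(F)`. -/
def rho (g : Matrix.SpecialLinearGroup (Fin 3) F) (x : Octo F) : Octo F :=
  ⟨x.x1, Matrix.vecMul x.u (g : Matrix (Fin 3) (Fin 3) F),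
   Matrix.vecMul x.v (Matrix.transpose (↑(g⁻¹) : Matrix (Fin 3) (Fin 3) F)), x.x8⟩

/-- The automorphism `ℏ` of `O`. -/
def hbar (x : Octo F) : Octo F := ⟨x.x8, -x.v, -x.u, x.x1⟩

/-- The automorphism `δ₁(u)` of `O`. -/
def delta1 (w : Fin 3 → F) (y : Octo F) : Octo F :=
  ⟨y.x1 - dot w y.v,
   fun i => (y.x1 - y.x8 - dot w y.v) * w i + y.u i,
   fun i => y.v i - cross y.u w i,
   y.x8 + dot w y.v⟩

/-- The automorphism `δ₂(v)` of `O`. -/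
def delta2 (w : Fin 3 → F) (y : Octo F) : Octo F :=
  ⟨y.x1 + dot y.u w,
   fun i => y.u i + cross y.v w i,
   fun i => (-y.x1 + y.x8 - dot y.u w) * w i + y.v i,
   y.x8 - dot y.u w⟩

end OctoPaper

open OctoPaper


namespace OctoPaper
variable {F : Type*} [Field F]

lemma rho_mul (g₁ g₂ : Matrix.SpecialLinearGroup (Fin 3) F) (a : Octo F) :
    rho (g₁ * g₂) a = rho g₂ (rho g₁ a) := by
  unfold rho
  simp [Matrix.vecMul_vecMul, mul_inv_rev, Matrix.transpose_mul]

lemma key (B : Matrix (Fin 3) (Fin 3) F) (hdet : B.det = 1) (a : Octo F)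
    (hrow : a.u = fun j => B 0 j) :
    rho (⟨B, hdet⟩ : Matrix.SpecialLinearGroup (Fin 3) F)⁻¹ a
      = ⟨a.x1, ![1, 0, 0], B.mulVec a.v, a.x8⟩ := by
  unfold rho
  simp only [Octo.mk.injEq]
  refine ⟨trivial, ?_, ?_, trivial⟩
  · have h1 : a.u = Matrix.vecMul ![(1:F),0,0] B := by
      funext j
      simp [hrow, Matrix.vecMul, dotProduct, Fin.sum_univ_three]
    change Matrix.vecMul a.u B.adjugate = _
    rw [h1, Matrix.vecMul_vecMul, Matrix.mul_adjugate]
    simp [hdet]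
  · have e : (((⟨B, hdet⟩ : Matrix.SpecialLinearGroup (Fin 3) F)⁻¹⁻¹ : Matrix.SpecialLinearGroup (Fin 3) F) : Matrix (Fin 3) (Fin 3) F) = B :=
      congrArg (fun g : Matrix.SpecialLinearGroup (Fin 3) F => (g : Matrix (Fin 3) (Fin 3) F))
        (inv_inv (G := Matrix.SpecialLinearGroup (Fin 3) F) ⟨B, hdet⟩)
    refine (congrArg (fun M : Matrix (Fin 3) (Fin 3) F => Matrix.vecMul a.v M.transpose) e).trans ?_
    exact Matrix.vecMul_transpose B a.v

end OctoPaper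

/-- Remark 3.3(a): if `u ≠ 0` then by SL₃ the octonion can be brought to the form
`(α, (1,0,0), v', β)` with `v' = (λ,0,0)` or `v' = (0,1,0)`. -/
theorem reduction_u_nonzero (F : Type*) [Field F] (a : Octo F) (hu : a.u ≠ 0) :
    ∃ (g : Matrix.SpecialLinearGroup (Fin 3) F) (v' : Fin 3 → F),
      rho g a = ⟨a.x1, ![1, 0, 0], v', a.x8⟩ ∧
      ((∃ lam : F, v' = ![lam, 0, 0]) ∨ v' = ![0, 1, 0]) := by
  classical
  -- Step 1: bring u to (1,0,0)
  have step1 : ∃ (g₁ : Matrix.SpecialLinearGroup (Fin 3) F) (w : Fin 3 → F),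
      rho g₁ a = ⟨a.x1, ![1, 0, 0], w, a.x8⟩ := by
    by_cases h0 : a.u 0 ≠ 0
    · have hdet : (!![a.u 0, a.u 1, a.u 2; 0, (a.u 0)⁻¹, 0; 0, 0, 1] :
          Matrix (Fin 3) (Fin 3) F).det = 1 := by
        simp [Matrix.det_fin_three, Matrix.vecHead, Matrix.vecTail]
        field_simp
      refine ⟨_, _, key _ hdet a ?_⟩
      funext j; fin_cases j <;> simp
    · push_neg at h0
      by_cases h1 : a.u 1 ≠ 0
      · have hdet : (!![a.u 0, a.u 1, a.u 2; -(a.u 1)⁻¹, 0, 0; 0, 0, 1] :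
            Matrix (Fin 3) (Fin 3) F).det = 1 := by
          simp [Matrix.det_fin_three, Matrix.vecHead, Matrix.vecTail]
          field_simp
        refine ⟨_, _, key _ hdet a ?_⟩
        funext j; fin_cases j <;> simp
      · push_neg at h1
        have h2 : a.u 2 ≠ 0 := by
          intro h2
          apply hu
          funext j; fin_cases j <;> simp [h0, h1, h2]
        have hdet : (!![a.u 0, a.u 1, a.u 2; 0, 1, 0; -(a.u 2)⁻¹, 0, 0] :
            Matrix (Fin 3) (Fin 3) F).det = 1 := by
          simp [Matrix.det_fin_three, Matrix.vecHead, Matrix.vecTail]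
          field_simp
        refine ⟨_, _, key _ hdet a ?_⟩
        funext j; fin_cases j <;> simp
  obtain ⟨g₁, w, hg₁⟩ := step1
  set a₁ : Octo F := ⟨a.x1, ![1, 0, 0], w, a.x8⟩ with ha₁
  -- Step 2: normalize v
  by_cases hw0 : w 0 ≠ 0
  · have hdet : (!![1, 0, 0; -(w 1) / w 0, 1, 0; -(w 2) / w 0, 0, 1] :
        Matrix (Fin 3) (Fin 3) F).det = 1 := by
      simp [Matrix.det_fin_three, Matrix.vecHead, Matrix.vecTail]
    let G : Matrix.SpecialLinearGroup (Fin 3) F := ⟨_, hdet⟩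
    refine ⟨g₁ * G⁻¹, ![w 0, 0, 0], ?_, Or.inl ⟨w 0, rfl⟩⟩
    rw [rho_mul, hg₁]
    refine (key _ hdet a₁ (by funext j; fin_cases j <;> simp [ha₁])).trans ?_
    simp only [Octo.mk.injEq]
    refine ⟨rfl, trivial, ?_, rfl⟩
    funext j
    fin_cases j <;> (try simp [ha₁, Matrix.mulVec, dotProduct, Fin.sum_univ_three]) <;>
      (try field_simp) <;> (try ring)
  · push_neg at hw0
    by_cases hw1 : w 1 ≠ 0
    · have hdet : (!![1, 0, 0; 0, (w 1)⁻¹, 0; 0, -(w 2), w 1] :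
          Matrix (Fin 3) (Fin 3) F).det = 1 := by
        simp [Matrix.det_fin_three, Matrix.vecHead, Matrix.vecTail]
        field_simp
      let G : Matrix.SpecialLinearGroup (Fin 3) F := ⟨_, hdet⟩
      refine ⟨g₁ * G⁻¹, ![0, 1, 0], ?_, Or.inr rfl⟩
      rw [rho_mul, hg₁]
      refine (key _ hdet a₁ (by funext j; fin_cases j <;> simp [ha₁])).trans ?_
      simp only [Octo.mk.injEq]
      refine ⟨rfl, trivial, ?_, rfl⟩
      funext j
      fin_cases j <;> (try simp [ha₁, Matrix.mulVec, dotProduct, Fin.sum_univ_three, hw0]) <;>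
        (try field_simp) <;> (try ring)
    · push_neg at hw1
      by_cases hw2 : w 2 ≠ 0
      · have hdet : (!![1, 0, 0; 0, 0, (w 2)⁻¹; 0, -(w 2), 0] :
            Matrix (Fin 3) (Fin 3) F).det = 1 := by
          simp [Matrix.det_fin_three, Matrix.vecHead, Matrix.vecTail]
          field_simp
        let G : Matrix.SpecialLinearGroup (Fin 3) F := ⟨_, hdet⟩
        refine ⟨g₁ * G⁻¹, ![0, 1, 0], ?_, Or.inr rfl⟩
        rw [rho_mul, hg₁]
        refine (key _ hdet a₁ (by funext j; fin_cases j <;> simp [ha₁])).trans ?_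
        simp only [Octo.mk.injEq]
        refine ⟨rfl, trivial, ?_, rfl⟩
        funext j
        fin_cases j <;> (try simp [ha₁, Matrix.mulVec, dotProduct, Fin.sum_univ_three, hw0, hw1]) <;>
          (try field_simp) <;> (try ring)
      · push_neg at hw2
        refine ⟨g₁, w, hg₁, Or.inl ⟨0, ?_⟩⟩
        funext j
        fin_cases j <;> simp [hw0, hw1, hw2]
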